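/- Let f : ℝᵖ × ℝⁿ → ℝ ∪ {∞}, let K ⊂ ℝʳ be a closed convex cone, φ : ℝⁿ → ℝʳ continuously differentiable and K-convex, and for each u ∈ ℝᵖ let g(·; u) : ℝⁿ → ℝ ∪ {∞} be closed, proper, and m-strongly convex (m > 0). Let θ̄ ≥ 0 and θ¹, …, θᴹ ∈ ℝⁿ with ‖θⁱ‖ ≤ θ̄. Suppose (u⋆, ŵ⋆) satisfies: ŵ⋆ ∈ dom g(·; u⋆), and (u⋆, ŵ⋆ + w̃) ∈ dom f for every w̃ ∈ ℝⁿ with ‖w̃‖ ≤ θ̄/m (robustness constraint). Let λ⋆ ∈ K* satisfy −Dφ(ŵ⋆)ᵀλ⋆ ∈ ∂_w g(ŵ⋆; u⋆), and let wⁱ⋆ be the unique minimizer of w ↦ g(w; u⋆) + ⟨λ⋆, φ(w)⟩ + ⟨θⁱ, w⟩ and w⋆ = (1/M) Σᵢ wⁱ⋆. Then ‖ŵ⋆ − w⋆‖ ≤ θ̄/m, w⋆ ∈ dom g(·; u⋆), and (u⋆, w⋆) ∈ dom f. -/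

import Mathlib

open scoped RealInnerProductSpace
open Filter Topology

noncomputable section

/-- `ℝⁿ` with the standard inner product. -/
abbrev Eu (n : ℕ) : Type := EuclideanSpace ℝ (Fin n)

/-- The (effective) domain of an extended-real-valued function. -/
def edom {n : ℕ} (g : Eu n → EReal) : Set (Eu n) := {x | g x < ⊤}

/-- A function `ℝⁿ → ℝ ∪ {∞}` is proper: it takes values in `ℝ ∪ {∞}` (never `-∞`)
and is not identically `∞`. -/
def ProperFn {n : ℕ} (g : Eu n → EReal) : Prop := (∀ x, ⊥ < g x) ∧ ∃ x, g x < ⊤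

/-- A function is closed if its epigraph is a closed set. -/
def ClosedFn {n : ℕ} (g : Eu n → EReal) : Prop :=
  IsClosed {p : Eu n × ℝ | g p.1 ≤ (p.2 : EReal)}

/-- Convexity for extended-real-valued functions. -/
def ConvexFn {n : ℕ} (g : Eu n → EReal) : Prop :=
  ∀ x y : Eu n, ∀ a b : ℝ, 0 ≤ a → 0 ≤ b → a + b = 1 →
    g (a • x + b • y) ≤ (a : EReal) * g x + (b : EReal) * g y

/-- `m`-strong convexity: `g - (m/2)‖·‖²` is convex, and the domain of `g` is convex. -/
def StrongConvexFn {n : ℕ} (m : ℝ) (g : Eu n → EReal) : Prop :=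
  Convex ℝ (edom g) ∧ ConvexFn (fun x => g x - ((m / 2 * ‖x‖ ^ 2 : ℝ) : EReal))

/-- The subdifferential of `g` at `x`:
`∂g(x) = {v : g(z) ≥ g(x) + ⟨v, z − x⟩ for all z}`. -/
def subdiff {n : ℕ} (g : Eu n → EReal) (x : Eu n) : Set (Eu n) :=
  {v | ∀ z, g x + ((⟪v, z - x⟫ : ℝ) : EReal) ≤ g z}

/-- `w` is the unique minimizer of `h`. -/
def IsUniqueMin {n : ℕ} (h : Eu n → EReal) (w : Eu n) : Prop :=
  ∀ z, z ≠ w → h w < h z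

/-- `K` is a closed convex cone. -/
def IsClosedConvexCone {r : ℕ} (K : Set (Eu r)) : Prop :=
  IsClosed K ∧ Convex ℝ K ∧ ∀ c : ℝ, 0 ≤ c → ∀ x ∈ K, c • x ∈ K

/-- The dual cone `K* = {v : ⟨v, x⟩ ≥ 0 for all x ∈ K}`. -/
def dualConeSet {r : ℕ} (K : Set (Eu r)) : Set (Eu r) := {v | ∀ x ∈ K, 0 ≤ ⟪v, x⟫}

/-- `φ` is `K`-convex: `φ(αx + (1−α)y) ≼_K αφ(x) + (1−α)φ(y)`. -/
def KConvexFn {n r : ℕ} (K : Set (Eu r)) (φ : Eu n → Eu r) : Prop :=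
  ∀ x y : Eu n, ∀ a b : ℝ, 0 ≤ a → 0 ≤ b → a + b = 1 →
    a • φ x + b • φ y - φ (a • x + b • y) ∈ K

/-- The dual function `ḡ*(λ) = inf_w (g(w) + ⟨λ, φ(w)⟩)`. -/
def dualFn {n r : ℕ} (g : Eu n → EReal) (φ : Eu n → Eu r) (lam : Eu r) : EReal :=
  ⨅ w : Eu n, (g w + ((⟪lam, φ w⟫ : ℝ) : EReal))

/-- The convex conjugate `f*(v) = sup_x (⟨x, v⟩ − f(x))`. -/
def econj {n : ℕ} (f : Eu n → EReal) (v : Eu n) : EReal :=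
  ⨆ x : Eu n, (((⟪x, v⟫ : ℝ) : EReal) - f x)


/-- Auxiliary: norm-squared of a convex combination. -/
lemma comb_norm_sq_aux {n : ℕ} (x y : Eu n) (a b : ℝ) (hab : a + b = 1) :
    ‖a • x + b • y‖ ^ 2 = a * ‖x‖ ^ 2 + b * ‖y‖ ^ 2 - a * b * ‖x - y‖ ^ 2 := by
  have ha : a = 1 - b := by linarith
  subst ha
  have h1 : ‖(1 - b) • x + b • y‖ ^ 2
      = (1 - b) ^ 2 * ‖x‖ ^ 2 + 2 * ((1 - b) * b) * ⟪x, y⟫ + b ^ 2 * ‖y‖ ^ 2 := by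
    rw [norm_add_sq_real, norm_smul, norm_smul, real_inner_smul_left, real_inner_smul_right]
    simp only [Real.norm_eq_abs, mul_pow, sq_abs]
    ring
  have h2 : ‖x - y‖ ^ 2 = ‖x‖ ^ 2 - 2 * ⟪x, y⟫ + ‖y‖ ^ 2 := norm_sub_sq_real x y
  rw [h1, h2]; ring

/-- Auxiliary: quadratic growth at a minimizer of a strongly convex function
plus a convex real term. -/
lemma quad_growth_aux {n : ℕ} (m : ℝ) (g : Eu n → EReal)
    (hconv : ConvexFn (fun x => g x - ((m / 2 * ‖x‖ ^ 2 : ℝ) : EReal)))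
    (l : Eu n → ℝ)
    (hl : ∀ x y : Eu n, ∀ a b : ℝ, 0 ≤ a → 0 ≤ b → a + b = 1 →
      l (a • x + b • y) ≤ a * l x + b * l y)
    (w0 z : Eu n) (G0 Gz : ℝ) (hG0 : g w0 = (G0 : EReal)) (hGz : g z = (Gz : EReal))
    (hmin : ∀ t ∈ Set.Ioo (0:ℝ) 1,
      ((G0 + l w0 : ℝ) : EReal) ≤ g ((1 - t) • w0 + t • z)
        + ((l ((1 - t) • w0 + t • z) : ℝ) : EReal)) :
    G0 + l w0 + m / 2 * ‖z - w0‖ ^ 2 ≤ Gz + l z := by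
  have key : ∀ t ∈ Set.Ioo (0:ℝ) 1,
      G0 + l w0 + m / 2 * (1 - t) * ‖z - w0‖ ^ 2 ≤ Gz + l z := by
    intro t ht
    obtain ⟨ht0, ht1⟩ := ht
    have ha : (0:ℝ) ≤ 1 - t := by linarith
    have hab : (1 - t) + t = 1 := by ring
    have hc := hconv w0 z (1 - t) t ha ht0.le hab
    simp only [hG0, hGz] at hc
    set wt := (1 - t) • w0 + t • z with hwt
    set q0 : ℝ := m / 2 * ‖w0‖ ^ 2
    set qz : ℝ := m / 2 * ‖z‖ ^ 2
    set qt : ℝ := m / 2 * ‖wt‖ ^ 2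
    set R : ℝ := (1 - t) * (G0 - q0) + t * (Gz - qz) with hR
    have hc' : g wt - (qt : EReal) ≤ (R : EReal) := by
      refine le_trans hc (le_of_eq ?_)
      rw [hR]
      push_cast
      rfl
    have h2 : g wt ≤ ((R + qt : ℝ) : EReal) := by
      calc g wt = g wt - (qt : EReal) + (qt : EReal) := EReal.sub_add_cancel.symm
        _ ≤ (R : EReal) + (qt : EReal) := add_le_add hc' le_rfl
        _ = ((R + qt : ℝ) : EReal) := (EReal.coe_add _ _).symm
    have h3 := hmin t ⟨ht0, ht1⟩
    have h4 : ((G0 + l w0 : ℝ) : EReal) ≤ ((R + qt + l wt : ℝ) : EReal) := by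
      refine le_trans h3 ?_
      calc g wt + ((l wt : ℝ) : EReal) ≤ ((R + qt : ℝ) : EReal) + ((l wt : ℝ) : EReal) :=
            add_le_add h2 le_rfl
        _ = ((R + qt + l wt : ℝ) : EReal) := (EReal.coe_add _ _).symm
    have hreal : G0 + l w0 ≤ R + qt + l wt := EReal.coe_le_coe_iff.mp h4
    have hlin := hl w0 z (1 - t) t ha ht0.le hab
    have hq : ‖wt‖ ^ 2 = (1 - t) * ‖w0‖ ^ 2 + t * ‖z‖ ^ 2 - (1 - t) * t * ‖w0 - z‖ ^ 2 :=
      comb_norm_sq_aux w0 z (1 - t) t hab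
    have hnrm : ‖w0 - z‖ = ‖z - w0‖ := norm_sub_rev _ _
    have h5 : t * (G0 + l w0 + m / 2 * (1 - t) * ‖z - w0‖ ^ 2) ≤ t * (Gz + l z) := by
      simp only [hR, qt, q0, qz, hq, hnrm] at hreal
      nlinarith [hreal, hlin]
    exact le_of_mul_le_mul_left h5 ht0
  have hcont : Continuous (fun t : ℝ => G0 + l w0 + m / 2 * (1 - t) * ‖z - w0‖ ^ 2) := by
    continuity
  have htend : Tendsto (fun t : ℝ => G0 + l w0 + m / 2 * (1 - t) * ‖z - w0‖ ^ 2)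
      (𝓝[>] (0:ℝ)) (𝓝 (G0 + l w0 + m / 2 * (1 - 0) * ‖z - w0‖ ^ 2)) :=
    (hcont.tendsto 0).mono_left nhdsWithin_le_nhds
  have := le_of_tendsto htend
    (Filter.eventually_of_mem (Ioo_mem_nhdsGT_of_mem ⟨le_refl 0, zero_lt_one⟩) key)
  simpa using this

/-- Auxiliary: gradient inequality for a convex differentiable function of the
form `w ↦ ⟪λ, φ w⟫`. -/
lemma grad_ineq_aux {n r : ℕ} (φ : Eu n → Eu r) (hφ : ContDiff ℝ 1 φ) (lamst : Eu r)
    (hψ : ∀ x y : Eu n, ∀ a b : ℝ, 0 ≤ a → 0 ≤ b → a + b = 1 →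
      ⟪lamst, φ (a • x + b • y)⟫ ≤ a * ⟪lamst, φ x⟫ + b * ⟪lamst, φ y⟫)
    (w z : Eu n) :
    ⟪lamst, φ w⟫ + ⟪(ContinuousLinearMap.adjoint (fderiv ℝ φ w)) lamst, z - w⟫
      ≤ ⟪lamst, φ z⟫ := by
  set q : ℝ → ℝ := fun t => ⟪lamst, φ (w + t • (z - w))⟫ with hqdef
  have hline : HasDerivAt (fun t : ℝ => w + t • (z - w)) (z - w) (0:ℝ) := by
    simpa using ((hasDerivAt_id (0:ℝ)).smul_const (z - w)).const_add w
  have hφd : HasFDerivAt φ (fderiv ℝ φ w) (w + (0:ℝ) • (z - w)) := by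
    simpa using (hφ.differentiable one_ne_zero w).hasFDerivAt
  have hcomp : HasDerivAt (fun t : ℝ => φ (w + t • (z - w))) ((fderiv ℝ φ w) (z - w)) 0 :=
    hφd.comp_hasDerivAt 0 hline
  have hinner : HasFDerivAt (fun y : Eu r => ⟪lamst, y⟫) (innerSL ℝ lamst)
      (φ (w + (0:ℝ) • (z - w))) := (innerSL ℝ lamst).hasFDerivAt
  have hq : HasDerivAt q ⟪lamst, (fderiv ℝ φ w) (z - w)⟫ 0 := by
    have h := hinner.comp_hasDerivAt 0 hcomp
    rw [innerSL_apply_apply] at h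
    exact h
  have hslope : ∀ t ∈ Set.Ioc (0:ℝ) 1, slope q 0 t ≤ q 1 - q 0 := by
    intro t ht
    obtain ⟨ht0, ht1⟩ := ht
    have hab : (1 - t) + t = 1 := by ring
    have hpt : w + t • (z - w) = (1 - t) • w + t • z := by
      rw [smul_sub, sub_smul, one_smul]; abel
    have hconv := hψ w z (1 - t) t (by linarith) ht0.le hab
    rw [← hpt] at hconv
    have hq0 : q 0 = ⟪lamst, φ w⟫ := by simp [hqdef]
    have hq1 : q 1 = ⟪lamst, φ z⟫ := by simp [hqdef]
    rw [slope_def_field, hq0, hq1, sub_zero, div_le_iff₀ ht0]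
    nlinarith [hconv]
  have hmono : 𝓝[>] (0:ℝ) ≤ 𝓝[≠] (0:ℝ) :=
    nhdsWithin_mono 0 (fun x hx => ne_of_gt hx)
  have htend : Tendsto (slope q 0) (𝓝[>] (0:ℝ)) (𝓝 ⟪lamst, (fderiv ℝ φ w) (z - w)⟫) :=
    (hasDerivAt_iff_tendsto_slope.mp hq).mono_left hmono
  have hle : ⟪lamst, (fderiv ℝ φ w) (z - w)⟫ ≤ q 1 - q 0 :=
    le_of_tendsto htend
      (Filter.eventually_of_mem (Ioc_mem_nhdsGT_of_mem ⟨le_refl 0, zero_lt_one⟩) hslope)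
  have hadj : ⟪(ContinuousLinearMap.adjoint (fderiv ℝ φ w)) lamst, z - w⟫
      = ⟪lamst, (fderiv ℝ φ w) (z - w)⟫ :=
    ContinuousLinearMap.adjoint_inner_left _ _ _
  have hq0 : q 0 = ⟪lamst, φ w⟫ := by simp [hqdef]
  have hq1 : q 1 = ⟪lamst, φ z⟫ := by simp [hqdef]
  rw [hq0, hq1] at hle
  rw [hadj]
  linarith


/-- Robust BiMPC feasibility: if `(u⋆, ŵ⋆)` satisfies the robustness
constraint `(u⋆, ŵ⋆ + w̃) ∈ dom f` for all `‖w̃‖ ≤ θ̄/m`, and `λ⋆ ∈ K*` satisfies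
`−Dφ(ŵ⋆)ᵀλ⋆ ∈ ∂_w g(ŵ⋆; u⋆)`, then the average `w⋆` of the perturbed minimizers satisfies
`‖ŵ⋆ − w⋆‖ ≤ θ̄/m`, `w⋆ ∈ dom g(·; u⋆)` and `(u⋆, w⋆) ∈ dom f`. -/
theorem stmt15 {p n r : ℕ} (m : ℝ) (hm : 0 < m)
    (f : Eu p × Eu n → EReal)
    (K : Set (Eu r)) (hK : IsClosedConvexCone K)
    (φ : Eu n → Eu r) (hφ : ContDiff ℝ 1 φ) (hφK : KConvexFn K φ)
    (g : Eu n → Eu p → EReal)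
    (hg : ∀ u : Eu p, ClosedFn (fun w => g w u) ∧ ProperFn (fun w => g w u) ∧
      StrongConvexFn m (fun w => g w u))
    (θbar : ℝ) (hθbar : 0 ≤ θbar)
    (M : ℕ) (hM : 0 < M)
    (θ : Fin M → Eu n) (hθ : ∀ i, ‖θ i‖ ≤ θbar)
    (ust : Eu p) (what : Eu n)
    (hdom : what ∈ edom (fun w => g w ust))
    (hrobust : ∀ wt : Eu n, ‖wt‖ ≤ θbar / m → f (ust, what + wt) < ⊤)
    (lamst : Eu r) (hlamst : lamst ∈ dualConeSet K)
    (hopt : -(ContinuousLinearMap.adjoint (fderiv ℝ φ what)) lamst ∈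
      subdiff (fun w => g w ust) what)
    (wi : Fin M → Eu n)
    (hwi : ∀ i, IsUniqueMin
      (fun w => g w ust + ((⟪lamst, φ w⟫ + ⟪θ i, w⟫ : ℝ) : EReal)) (wi i)) :
    ‖what - (M : ℝ)⁻¹ • ∑ i, wi i‖ ≤ θbar / m ∧
    ((M : ℝ)⁻¹ • ∑ i, wi i) ∈ edom (fun w => g w ust) ∧
    f (ust, (M : ℝ)⁻¹ • ∑ i, wi i) < ⊤ := by
  classical
  -- basic facts about g(·, ust)
  have hproper : ProperFn (fun w => g w ust) := (hg ust).2.1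
  have hbot : ∀ w, ⊥ < g w ust := hproper.1
  have hsc : Convex ℝ (edom (fun w => g w ust)) ∧
      ConvexFn (fun x => g x ust - ((m / 2 * ‖x‖ ^ 2 : ℝ) : EReal)) := (hg ust).2.2
  have hgtop : g what ust < ⊤ := hdom
  set G0 : ℝ := (g what ust).toReal with hG0def
  have hG0 : g what ust = (G0 : EReal) := (EReal.coe_toReal hgtop.ne (hbot what).ne').symm
  -- ψ and its convexity
  set ψ : Eu n → ℝ := fun w => ⟪lamst, φ w⟫ with hψdef
  have hψconv : ∀ x y : Eu n, ∀ a b : ℝ, 0 ≤ a → 0 ≤ b → a + b = 1 →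
      ψ (a • x + b • y) ≤ a * ψ x + b * ψ y := by
    intro x y a b ha hb hab
    have hmem := hφK x y a b ha hb hab
    have h0 := hlamst _ hmem
    simp only [inner_sub_right, inner_add_right, real_inner_smul_right] at h0
    simp only [hψdef]
    linarith
  set A : Eu n := (ContinuousLinearMap.adjoint (fderiv ℝ φ what)) lamst with hAdef
  have hgrad : ∀ z, ψ what + ⟪A, z - what⟫ ≤ ψ z :=
    grad_ineq_aux φ hφ lamst hψconv what
  -- ŵ minimizes h₀ = g + ψ
  have h0min : ∀ z : Eu n, ((G0 + ψ what : ℝ) : EReal) ≤ g z ust + ((ψ z : ℝ) : EReal) := by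
    intro z
    have hsub := hopt z
    have hneg : (⟪-A, z - what⟫ : ℝ) = -⟪A, z - what⟫ := inner_neg_left _ _
    calc ((G0 + ψ what : ℝ) : EReal)
        ≤ ((G0 + ⟪-A, z - what⟫ + ψ z : ℝ) : EReal) := by
          apply EReal.coe_le_coe_iff.mpr
          rw [hneg]
          linarith [hgrad z]
      _ = (g what ust + ((⟪-A, z - what⟫ : ℝ) : EReal)) + ((ψ z : ℝ) : EReal) := by
          rw [hG0]
          push_cast
          rfl
      _ ≤ g z ust + ((ψ z : ℝ) : EReal) := add_le_add hsub le_rfl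
  -- per-index bound
  have hper : ∀ i : Fin M, ‖what - wi i‖ ≤ θbar / m ∧ g (wi i) ust < ⊤ := by
    intro i
    by_cases heq : wi i = what
    · rw [heq]
      refine ⟨by simpa using div_nonneg hθbar hm.le, hgtop⟩
    · have hlt : g (wi i) ust + ((⟪lamst, φ (wi i)⟫ + ⟪θ i, wi i⟫ : ℝ) : EReal)
          < g what ust + ((⟪lamst, φ what⟫ + ⟪θ i, what⟫ : ℝ) : EReal) :=
        hwi i what (fun h => heq h.symm)
      have hhtop : g what ust + ((⟪lamst, φ what⟫ + ⟪θ i, what⟫ : ℝ) : EReal) < ⊤ := by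
        rw [hG0]
        exact_mod_cast lt_of_le_of_lt (le_of_eq (EReal.coe_add _ _).symm) (EReal.coe_lt_top _)
      have hitop : g (wi i) ust < ⊤ := by
        by_contra h'
        push_neg at h'
        have h'' : g (wi i) ust = ⊤ := top_le_iff.mp h'
        rw [h''] at hlt
        rw [EReal.top_add_of_ne_bot (EReal.coe_ne_bot _)] at hlt
        exact absurd (lt_trans hlt hhtop) (lt_irrefl ⊤)
      set Gi : ℝ := (g (wi i) ust).toReal with hGidef
      have hGi : g (wi i) ust = (Gi : EReal) :=
        (EReal.coe_toReal hitop.ne (hbot (wi i)).ne').symm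
      -- first quad growth: h₀ at ŵ, evaluated at wi i
      have QA : G0 + ψ what + m / 2 * ‖wi i - what‖ ^ 2 ≤ Gi + ψ (wi i) := by
        refine quad_growth_aux m (fun w => g w ust) hsc.2 ψ hψconv what (wi i) G0 Gi hG0 hGi ?_
        intro t _
        exact h0min _
      -- second quad growth: h_i at wi i, evaluated at ŵ
      set li : Eu n → ℝ := fun w => ψ w + ⟪θ i, w⟫ with hlidef
      have hliconv : ∀ x y : Eu n, ∀ a b : ℝ, 0 ≤ a → 0 ≤ b → a + b = 1 →
          li (a • x + b • y) ≤ a * li x + b * li y := by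
        intro x y a b ha hb hab
        have h1 := hψconv x y a b ha hb hab
        have h2 : (⟪θ i, a • x + b • y⟫ : ℝ) = a * ⟪θ i, x⟫ + b * ⟪θ i, y⟫ := by
          rw [inner_add_right, real_inner_smul_right, real_inner_smul_right]
        simp only [hlidef]
        rw [h2]
        linarith
      have QB : Gi + li (wi i) + m / 2 * ‖what - wi i‖ ^ 2 ≤ G0 + li what := by
        refine quad_growth_aux m (fun w => g w ust) hsc.2 li hliconv (wi i) what Gi G0 hGi hG0 ?_
        intro t _
        set wt := (1 - t) • wi i + t • what with hwtdef
        by_cases hwteq : wt = wi i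
        · show ((Gi + li (wi i) : ℝ) : EReal) ≤ g wt ust + ((li wt : ℝ) : EReal)
          rw [hwteq, hGi]
          exact le_of_eq (EReal.coe_add _ _).symm
        · have := (hwi i wt hwteq).le
          simp only [hGi] at this
          show ((Gi + li (wi i) : ℝ) : EReal) ≤ g wt ust + ((li wt : ℝ) : EReal)
          calc ((Gi + li (wi i) : ℝ) : EReal)
              = (Gi : EReal) + ((⟪lamst, φ (wi i)⟫ + ⟪θ i, wi i⟫ : ℝ) : EReal) := by
                push_cast; rfl
            _ ≤ g wt ust + ((⟪lamst, φ wt⟫ + ⟪θ i, wt⟫ : ℝ) : EReal) := this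
            _ = g wt ust + ((li wt : ℝ) : EReal) := rfl
      -- combine
      have hnrm : ‖wi i - what‖ = ‖what - wi i‖ := norm_sub_rev _ _
      rw [hnrm] at QA
      have hsum : m * ‖what - wi i‖ ^ 2 ≤ ⟪θ i, what⟫ - ⟪θ i, wi i⟫ := by
        simp only [hlidef] at QB
        linarith [QA, QB]
      have hinner : (⟪θ i, what⟫ : ℝ) - ⟪θ i, wi i⟫ = ⟪θ i, what - wi i⟫ :=
        (inner_sub_right _ _ _).symm
      have hCS : (⟪θ i, what - wi i⟫ : ℝ) ≤ ‖θ i‖ * ‖what - wi i‖ :=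
        real_inner_le_norm _ _
      have hfin : m * ‖what - wi i‖ ^ 2 ≤ θbar * ‖what - wi i‖ := by
        have := hθ i
        nlinarith [hsum, hCS, norm_nonneg (what - wi i)]
      have hd0 : (0:ℝ) < ‖what - wi i‖ := by
        rw [norm_pos_iff]
        intro h
        exact heq (sub_eq_zero.mp h).symm
      refine ⟨?_, hitop⟩
      rw [le_div_iff₀ hm]
      nlinarith [hfin, hd0]
  -- assemble the three conclusions
  have hMne : (M : ℝ) ≠ 0 := Nat.cast_ne_zero.mpr hM.ne'
  have hMpos : (0:ℝ) < M := Nat.cast_pos.mpr hM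
  have hdiff : what - (M : ℝ)⁻¹ • ∑ i, wi i = (M : ℝ)⁻¹ • ∑ i, (what - wi i) := by
    have hsum : ∑ i : Fin M, (what - wi i) = (M : ℝ) • what - ∑ i, wi i := by
      rw [Finset.sum_sub_distrib, Finset.sum_const, Finset.card_univ, Fintype.card_fin,
        ← Nat.cast_smul_eq_nsmul ℝ]
    rw [hsum, smul_sub, inv_smul_smul₀ hMne]
  have hnormbound : ‖what - (M : ℝ)⁻¹ • ∑ i, wi i‖ ≤ θbar / m := by
    rw [hdiff, norm_smul]
    have h1 : ‖∑ i : Fin M, (what - wi i)‖ ≤ ∑ i : Fin M, ‖what - wi i‖ :=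
      norm_sum_le _ _
    have h2 : ∑ i : Fin M, ‖what - wi i‖ ≤ ∑ _i : Fin M, (θbar / m) :=
      Finset.sum_le_sum (fun i _ => (hper i).1)
    have h3 : ∑ _i : Fin M, (θbar / m) = (M : ℝ) * (θbar / m) := by
      rw [Finset.sum_const, Finset.card_univ, Fintype.card_fin, nsmul_eq_mul]
    have h4 : ‖(M : ℝ)⁻¹‖ = (M : ℝ)⁻¹ := by
      rw [Real.norm_eq_abs, abs_of_pos (inv_pos.mpr hMpos)]
    rw [h4]
    calc (M : ℝ)⁻¹ * ‖∑ i : Fin M, (what - wi i)‖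
        ≤ (M : ℝ)⁻¹ * ((M : ℝ) * (θbar / m)) := by
          apply mul_le_mul_of_nonneg_left _ (inv_nonneg.mpr hMpos.le)
          rw [← h3]
          exact le_trans h1 h2
      _ = θbar / m := by field_simp
  refine ⟨hnormbound, ?_, ?_⟩
  · -- domain membership
    have hconvdom : Convex ℝ (edom (fun w => g w ust)) := hsc.1
    have hrw : (M : ℝ)⁻¹ • ∑ i, wi i = ∑ i : Fin M, (M : ℝ)⁻¹ • wi i := Finset.smul_sum
    rw [hrw]
    apply hconvdom.sum_mem (fun i _ => inv_nonneg.mpr hMpos.le)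
    · rw [Finset.sum_const, Finset.card_univ, Fintype.card_fin, nsmul_eq_mul]
      field_simp
    · exact fun i _ => (hper i).2
  · -- f-domain
    have h := hrobust ((M : ℝ)⁻¹ • ∑ i, wi i - what)
      (by rw [norm_sub_rev]; exact hnormbound)
    simpa using h
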